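/- Let G=(V,E) be a complete p-partite multigraph with p≥3. Then Ncond(Ǧ) ⊆ stab(G,Φ) for every admissible matching policy Φ: for every μ∈Ncond(Ǧ), the Markov chain (W_n) of the model (G,Φ,μ) is positive recurrent. -/

import Mathlib

open scoped BigOperators

attribute [local instance] Classical.propDecidable

/-- A multigraph on the vertex set `V`: a symmetric binary relation on `V`,
possibly with self-loops. -/
structure Multigraph (V : Type*) where
  Adj : V → V → Prop
  symm : ∀ u v, Adj u v → Adj v u

namespace Multigraph

variable {V : Type*}

/-- The neighborhood `E(U)` of a set `U` of vertices. -/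
def nbhd (G : Multigraph V) (U : Set V) : Set V :=
  {v | ∃ u ∈ U, G.Adj u v}

/-- `V₁`, the set of self-looped vertices. -/
def loopSet (G : Multigraph V) : Set V := {v | G.Adj v v}

/-- `V₂`, the set of non-self-looped vertices. -/
def nonloopSet (G : Multigraph V) : Set V := {v | ¬ G.Adj v v}

/-- The maximal subgraph `Ǧ`, obtained by deleting all self-loops. -/
def check (G : Multigraph V) : Multigraph V where
  Adj u v := G.Adj u v ∧ u ≠ v
  symm u v h := ⟨G.symm u v h.1, h.2.symm⟩

/-- An independent set: a nonempty set of pairwise non-adjacent vertices. -/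
def IsIndep (G : Multigraph V) (I : Set V) : Prop :=
  I.Nonempty ∧ ∀ i ∈ I, ∀ j ∈ I, ¬ G.Adj i j

/-- Connectivity of a multigraph: any two nodes are joined by a path of edges. -/
def Connected (G : Multigraph V) : Prop :=
  ∀ u v : V, Relation.ReflTransGen G.Adj u v

/-- `G` is a bipartite graph: its vertex set splits into two parts such that every
edge joins the two parts (in particular, `G` has no self-loop). -/
def IsBipartiteGraph (G : Multigraph V) : Prop :=
  ∃ A B : Set V, (∀ v, v ∈ A ∨ v ∈ B) ∧ (∀ v, ¬(v ∈ A ∧ v ∈ B)) ∧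
    ∀ u v, G.Adj u v → (u ∈ A ∧ v ∈ B) ∨ (u ∈ B ∧ v ∈ A)

section Meas

variable [Fintype V]

/-- Total mass `μ(S)` of a set of vertices. -/
noncomputable def mass (μ : V → ℝ) (S : Set V) : ℝ := ∑ v, S.indicator μ v

/-- `μ ∈ ℳ(V)`: a probability measure with full support on `V`. -/
def FullSupport (μ : V → ℝ) : Prop := (∀ v, 0 < μ v) ∧ ∑ v, μ v = 1

/-- The stability condition `Ncond(G)`: fully supported probability measures `μ` such
that `μ(I) < μ(E(I))` for every independent set `I` of `G`. -/
def Ncond (G : Multigraph V) (μ : V → ℝ) : Prop :=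
  FullSupport μ ∧ ∀ I : Set V, G.IsIndep I → mass μ I < mass μ (G.nbhd I)

/-- The degree of a vertex: its number of neighbors (including itself if self-looped). -/
noncomputable def deg (G : Multigraph V) (i : V) : ℕ := (G.nbhd {i}).ncard

end Meas
section Chain

variable [DecidableEq V]

/-- The state space `𝕎` of admissible queue details. -/
def WSpace (G : Multigraph V) : Set (List V) :=
  {w | (∀ i j : V, i ≠ j → G.Adj i j → w.count i = 0 ∨ w.count j = 0) ∧
    ∀ i : V, G.Adj i i → w.count i ≤ 1}

/-- An admissible matching policy: a (possibly random) transition rule which, in state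
`w` upon the arrival of an item of class `v`, appends `v` when no compatible item is in
line, and otherwise deletes one stored item of a class compatible with `v`. -/
structure Policy (G : Multigraph V) where
  next : List V → V → List V → ℝ
  nonneg : ∀ w v w', 0 ≤ next w v w'
  total : ∀ w ∈ WSpace G, ∀ v : V, (∑' w' : List V, next w v w') = 1
  noMatch : ∀ w ∈ WSpace G, ∀ v : V, (∀ a ∈ w, ¬ G.Adj a v) → next w v (w ++ [v]) = 1
  matchRule : ∀ w ∈ WSpace G, ∀ v : V, (∃ a ∈ w, G.Adj a v) → ∀ w' : List V,
    next w v w' ≠ 0 → ∃ k : Fin w.length, G.Adj (w.get k) v ∧ w' = w.eraseIdx k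

/-- The transition kernel of the buffer-content Markov chain of the model `(G,Φ,μ)`. -/
noncomputable def kernel [Fintype V] (G : Multigraph V) (pol : Policy G) (μ : V → ℝ)
    (w w' : List V) : ℝ :=
  ∑ v : V, μ v * pol.next w v w'

/-- Irreducibility (on the state space `𝕎`) of a transition kernel. -/
def Irreducible (G : Multigraph V) (P : List V → List V → ℝ) : Prop :=
  ∀ w ∈ WSpace G, ∀ w' ∈ WSpace G, Relation.ReflTransGen (fun a b => 0 < P a b) w w'

/-- A stationary probability distribution, supported on `𝕎`, for a transition kernel. -/
def IsStationary (G : Multigraph V) (P : List V → List V → ℝ) (π : List V → ℝ) :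
    Prop :=
  (∀ w, 0 ≤ π w) ∧ (∀ w ∉ WSpace G, π w = 0) ∧ (∑' w : List V, π w) = 1 ∧
    ∀ w' : List V, (∑' w : List V, π w * P w w') = π w'

/-- Positive recurrence of the chain: irreducibility together with the existence of a
stationary probability distribution. -/
def PositiveRecurrent (G : Multigraph V) (P : List V → List V → ℝ) : Prop :=
  Irreducible G P ∧ ∃ π : List V → ℝ, IsStationary G P π

end Chain
/-- `G` is a complete `p`-partite multigraph: its maximal subgraph `Ǧ` is complete
`p`-partite, i.e. the vertex set partitions into `p` (maximal independent) parts, two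
nodes being `Ǧ`-adjacent iff they lie in distinct parts. -/
def CompletePPartite (G : Multigraph V) (p : ℕ) : Prop :=
  ∃ f : V → Fin p, Function.Surjective f ∧ ∀ u v : V, (check G).Adj u v ↔ f u ≠ f v
end Multigraph

open Multigraph

/-!
In a complete multipartite graph a class is compatible with every class outside its own part,
so at a nonempty state only arrivals from the part of a stored item stay unmatched. `Ncond` applied
to a part, an independent set of `Ǧ` whose neighbourhood is its complement, says that every part
has mass `< 1/2`. With `q < 1/2` the largest part mass and `β = 2(1 - q)`, the Lyapunov function
`β ^ |w|` then has geometric drift `P β^|·| ≤ (1/2 + 2q(1 - q)) β^|·| + β`, which bounds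
`E β^|W_n|` uniformly in `n`. The laws of `W_n` are therefore tight, and a limit point of their
Cesàro averages is a stationary law. Irreducibility holds because every class has a neighbour, so
every state can be emptied one match at a time and rebuilt from the empty state by arrivals that
find no match.
-/
open Filter Topology Finset

section Cesaro

noncomputable def cesaro (a : ℕ → ℝ) (n : ℕ) : ℝ :=
  (∑ m ∈ range (n + 1), a m) / (n + 1)

lemma cesaro_le {a : ℕ → ℝ} {c : ℝ} (h : ∀ m, a m ≤ c) (n : ℕ) : cesaro a n ≤ c := by
  rw [cesaro, div_le_iff₀ (by positivity)]
  calc ∑ m ∈ range (n + 1), a m ≤ ∑ _m ∈ range (n + 1), c := sum_le_sum fun m _ => h m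
    _ = c * (n + 1) := by simp [mul_comm]

lemma le_cesaro {a : ℕ → ℝ} {c : ℝ} (h : ∀ m, c ≤ a m) (n : ℕ) : c ≤ cesaro a n := by
  rw [cesaro, le_div_iff₀ (by positivity)]
  calc c * (n + 1) = ∑ _m ∈ range (n + 1), c := by simp [mul_comm]
    _ ≤ ∑ m ∈ range (n + 1), a m := sum_le_sum fun m _ => h m

lemma sum_cesaro {ι : Type*} (F : Finset ι) (a : ι → ℕ → ℝ) (n : ℕ) :
    ∑ i ∈ F, cesaro (a i) n = cesaro (fun m => ∑ i ∈ F, a i m) n := by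
  simp only [cesaro, ← sum_div]
  rw [sum_comm]

lemma cesaro_mul_const (a : ℕ → ℝ) (c : ℝ) (n : ℕ) :
    cesaro a n * c = cesaro (fun m => a m * c) n := by
  simp only [cesaro, div_mul_eq_mul_div, sum_mul]

lemma tendsto_cesaro_succ_sub_cesaro {a : ℕ → ℝ} (ha : ∀ m, a m ∈ Set.Icc (0 : ℝ) 1) :
    Tendsto (fun n => cesaro (fun m => a (m + 1)) n - cesaro a n) atTop (𝓝 0) := by
  have htel : ∀ n, cesaro (fun m => a (m + 1)) n - cesaro a n = (a (n + 1) - a 0) / (n + 1) := by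
    intro n
    rw [cesaro, cesaro, ← sub_div, sum_range_succ (fun m => a (m + 1)), sum_range_succ' a]
    ring
  simp only [htel]
  refine squeeze_zero_norm (fun n => ?_) tendsto_one_div_add_atTop_nhds_zero_nat
  have h1 := ha (n + 1)
  have h0 := ha 0
  rw [norm_div, Real.norm_eq_abs, Real.norm_eq_abs, abs_of_pos (by positivity : (0 : ℝ) < n + 1)]
  gcongr
  rw [abs_le]
  constructor <;> linarith [h1.1, h1.2, h0.1, h0.2]

end Cesaro

lemma Ultrafilter.exists_tendsto_of_mem_Icc (U : Ultrafilter ℕ) {f : ℕ → ℝ}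
    (hf : ∀ n, f n ∈ Set.Icc (0 : ℝ) 1) : ∃ c, Tendsto f U (𝓝 c) := by
  obtain ⟨c, -, hc⟩ := isCompact_Icc.ultrafilter_le_nhds' (U.map f)
    (Ultrafilter.mem_map.2 (univ_mem' hf))
  exact ⟨c, hc⟩

/-- Krylov–Bogolyubov: `π` is a limit point of the Cesàro averages of the laws `x n`. -/
theorem exists_stationary_of_tight {α : Type*} {S : Set α} {P : α → α → ℝ} {x : ℕ → α → ℝ}
    (hP : ∀ w', ∃ F : Finset α, ∀ w ∈ S, w ∉ F → P w w' = 0)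
    (hx0 : ∀ n w, 0 ≤ x n w) (hxS : ∀ n, ∀ w ∉ S, x n w = 0) (hx1 : ∀ n, HasSum (x n) 1)
    (hx_succ : ∀ n w', x (n + 1) w' = ∑' w, x n w * P w w')
    (htight : ∀ ε > 0, ∃ F : Finset α, ∀ n, 1 - ε ≤ ∑ w ∈ F, x n w) :
    ∃ π : α → ℝ, (∀ w, 0 ≤ π w) ∧ (∀ w ∉ S, π w = 0) ∧ ∑' w, π w = 1 ∧
      ∀ w', ∑' w, π w * P w w' = π w' := by
  let U := Ultrafilter.of (atTop : Filter ℕ)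
  have hx_le : ∀ n F, ∑ w ∈ F, x n w ≤ 1 :=
    fun n F => sum_le_hasSum F (fun w _ => hx0 n w) (hx1 n)
  have hx_mem : ∀ n w, x n w ∈ Set.Icc (0 : ℝ) 1 :=
    fun n w => ⟨hx0 n w, by simpa using hx_le n {w}⟩
  choose π hπ using fun w => U.exists_tendsto_of_mem_Icc fun n =>
    ⟨le_cesaro (hx_mem · w |>.1) n, cesaro_le (hx_mem · w |>.2) n⟩
  have hπF : ∀ F : Finset α, Tendsto (fun n => cesaro (fun m => ∑ w ∈ F, x m w) n) U
      (𝓝 (∑ w ∈ F, π w)) := fun F => by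
    simpa only [sum_cesaro] using tendsto_finsetSum F fun w _ => hπ w
  have hπ0 : ∀ w, 0 ≤ π w := fun w => ge_of_tendsto' (hπ w) (le_cesaro (hx0 · w))
  have hπS : ∀ w ∉ S, π w = 0 := fun w hw =>
    tendsto_nhds_unique (hπ w)
      (tendsto_const_nhds.congr fun n => by simp [cesaro, hxS _ w hw])
  have hπ_le : ∀ F : Finset α, ∑ w ∈ F, π w ≤ 1 :=
    fun F => le_of_tendsto' (hπF F) (cesaro_le (hx_le · F))
  have hπ_summable : Summable π := summable_of_sum_le hπ0 hπ_le
  refine ⟨π, hπ0, hπS, le_antisymm (hπ_summable.tsum_le_of_sum_le hπ_le) ?_, fun w' => ?_⟩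
  · refine le_of_forall_sub_le fun ε hε => ?_
    obtain ⟨F, hF⟩ := htight ε hε
    exact (ge_of_tendsto' (hπF F) (le_cesaro hF)).trans
      (hπ_summable.sum_le_tsum F fun w _ => hπ0 w)
  obtain ⟨F, hF⟩ := hP w'
  have hfin : ∀ y : α → ℝ, (∀ w ∉ S, y w = 0) →
      ∑' w, y w * P w w' = ∑ w ∈ F, y w * P w w' := fun y hy =>
    tsum_eq_sum fun w hwF => by
      by_cases hwS : w ∈ S
      · rw [hF w hwS hwF, mul_zero]
      · rw [hy w hwS, zero_mul]
  rw [hfin π hπS]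
  have hlim : Tendsto (fun n => ∑ w ∈ F, cesaro (x · w) n * P w w') U
      (𝓝 (∑ w ∈ F, π w * P w w')) :=
    tendsto_finsetSum F fun w _ => (hπ w).mul_const _
  have hshift : ∀ n, ∑ w ∈ F, cesaro (x · w) n * P w w' = cesaro (x · w') n +
      (cesaro (fun m => x (m + 1) w') n - cesaro (x · w') n) := fun n => by
    simp only [cesaro_mul_const, sum_cesaro, hx_succ, hfin _ (hxS _), add_sub_cancel]
  simp only [hshift] at hlim
  refine tendsto_nhds_unique hlim ?_
  simpa using (hπ w').add ((tendsto_cesaro_succ_sub_cesaro (hx_mem · w')).mono_left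
    (Ultrafilter.of_le _))

namespace Multigraph

variable {V : Type*}

section Mass

variable [Fintype V]

lemma mass_add_mass_compl (μ : V → ℝ) (S : Set V) : mass μ S + mass μ Sᶜ = ∑ v, μ v := by
  rw [mass, mass, ← sum_add_distrib]
  exact sum_congr rfl fun v _ => Set.indicator_self_add_compl_apply S μ v

lemma mass_nonneg {μ : V → ℝ} (hμ : ∀ v, 0 ≤ μ v) (S : Set V) : 0 ≤ mass μ S :=
  sum_nonneg fun v _ => Set.indicator_nonneg (fun v _ => hμ v) v

lemma mass_mono {μ : V → ℝ} (hμ : ∀ v, 0 ≤ μ v) {S T : Set V} (h : S ⊆ T) : mass μ S ≤ mass μ T :=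
  sum_le_sum fun v _ => Set.indicator_le_indicator_of_subset h (fun v => hμ v) v

lemma nonempty_of_mass_pos {μ : V → ℝ} {S : Set V} (h : 0 < mass μ S) : S.Nonempty := by
  by_contra hS
  simp [Set.not_nonempty_iff_eq_empty.1 hS, mass] at h

lemma sum_mul_ite_mem (μ : V → ℝ) (S : Set V) (a b : ℝ) :
    ∑ v, μ v * (if v ∈ S then a else b) = mass μ S * a + mass μ Sᶜ * b := by
  simp only [mass, sum_mul, ← sum_add_distrib]
  refine sum_congr rfl fun v _ => ?_
  by_cases hv : v ∈ S <;> simp [hv]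

end Mass

noncomputable def listsOfLengthLE (V : Type*) [Finite V] (n : ℕ) : Finset (List V) :=
  (List.finite_length_le V n).toFinset

@[simp]
lemma mem_listsOfLengthLE [Finite V] {n : ℕ} {w : List V} :
    w ∈ listsOfLengthLE V n ↔ w.length ≤ n :=
  Set.Finite.mem_toFinset _

section Queue

variable [DecidableEq V] {G : Multigraph V} {w w' : List V} {v : V}

def unmatched (G : Multigraph V) (w : List V) : Set V := {v | ∀ a ∈ w, ¬ G.Adj a v}

lemma mem_wspace_iff_pairwise : w ∈ WSpace G ↔ w.Pairwise fun a b => ¬ G.Adj a b := by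
  have : Std.Symm fun a b => ¬ G.Adj a b := ⟨fun a b h h' => h (G.symm _ _ h')⟩
  constructor
  · rintro ⟨hdist, hloop⟩
    refine List.pairwise_of_forall_sublist fun {a b} hab hadj => ?_
    obtain rfl | hne := eq_or_ne a b
    · have h2 : 2 ≤ w.count a := List.replicate_sublist_iff.1 (by simpa using hab)
      linarith [hloop a hadj]
    · have ha : a ∈ w := hab.subset (by simp)
      have hb : b ∈ w := hab.subset (by simp)
      rcases hdist a b hne hadj with h | h
      · exact List.count_eq_zero.1 h ha
      · exact List.count_eq_zero.1 h hb
  · intro hw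
    refine ⟨fun i j hij hadj => ?_, fun i hi => ?_⟩
    · by_contra! h
      exact hw.forall (List.count_pos_iff.1 (Nat.pos_of_ne_zero h.1))
        (List.count_pos_iff.1 (Nat.pos_of_ne_zero h.2)) hij hadj
    · by_contra! h
      exact hw.forall_sublist (List.replicate_sublist_iff.2 h : List.Sublist [i, i] w) hi

lemma nil_mem_wspace : ([] : List V) ∈ WSpace G :=
  mem_wspace_iff_pairwise.2 List.Pairwise.nil

lemma mem_wspace_of_sublist (h : w'.Sublist w) (hw : w ∈ WSpace G) : w' ∈ WSpace G :=
  mem_wspace_iff_pairwise.2 ((mem_wspace_iff_pairwise.1 hw).sublist h)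

lemma append_mem_wspace_iff : w ++ [v] ∈ WSpace G ↔ w ∈ WSpace G ∧ v ∈ G.unmatched w := by
  simp [mem_wspace_iff_pairwise, List.pairwise_append, unmatched]

namespace Policy

variable (pol : Policy G)

lemma hasSum_next (hw : w ∈ WSpace G) (v : V) : HasSum (pol.next w v) 1 := by
  have h := pol.total w hw v
  refine h ▸ Summable.hasSum ?_
  by_contra hns
  rw [tsum_eq_zero_of_not_summable hns] at h
  exact zero_ne_one h

lemma next_eq_zero_of_mem_unmatched (hw : w ∈ WSpace G) (hv : v ∈ G.unmatched w)
    (hne : w' ≠ w ++ [v]) : pol.next w v w' = 0 := by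
  have hpair := sum_le_hasSum {w ++ [v], w'} (fun u _ => pol.nonneg w v u) (pol.hasSum_next hw v)
  rw [sum_pair hne.symm, pol.noMatch w hw v hv] at hpair
  linarith [pol.nonneg w v w']

lemma eq_of_next_ne_zero (hw : w ∈ WSpace G) (h : pol.next w v w' ≠ 0) :
    (v ∈ G.unmatched w ∧ w' = w ++ [v]) ∨
      (v ∉ G.unmatched w ∧ ∃ k : Fin w.length, w' = w.eraseIdx k) := by
  by_cases hv : v ∈ G.unmatched w
  · exact .inl ⟨hv, not_imp_comm.1 (pol.next_eq_zero_of_mem_unmatched hw hv) h⟩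
  · have hmatch : ∃ a ∈ w, G.Adj a v := by simpa [unmatched] using hv
    obtain ⟨k, -, rfl⟩ := pol.matchRule w hw v hmatch w' h
    exact .inr ⟨hv, k, rfl⟩

lemma length_of_next_ne_zero (hw : w ∈ WSpace G) (h : pol.next w v w' ≠ 0) :
    w'.length = if v ∈ G.unmatched w then w.length + 1 else w.length - 1 := by
  rcases pol.eq_of_next_ne_zero hw h with ⟨hv, rfl⟩ | ⟨hv, k, rfl⟩
  · simp [hv]
  · simp [hv, List.length_eraseIdx_of_lt k.isLt]

lemma mem_wspace_of_next_ne_zero (hw : w ∈ WSpace G) (h : pol.next w v w' ≠ 0) :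
    w' ∈ WSpace G := by
  rcases pol.eq_of_next_ne_zero hw h with ⟨hv, rfl⟩ | ⟨-, k, rfl⟩
  · exact append_mem_wspace_iff.2 ⟨hw, hv⟩
  · exact mem_wspace_of_sublist (List.eraseIdx_sublist w k) hw

lemma sum_next_mul_length [Fintype V] (hw : w ∈ WSpace G) (v : V) (g : ℕ → ℝ) :
    ∑ w' ∈ listsOfLengthLE V (w.length + 1), pol.next w v w' * g w'.length =
      g (if v ∈ G.unmatched w then w.length + 1 else w.length - 1) := by
  have hsupp : ∀ w' ∉ listsOfLengthLE V (w.length + 1), pol.next w v w' = 0 := fun w' hw' => by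
    by_contra h
    refine hw' (mem_listsOfLengthLE.2 ?_)
    rw [pol.length_of_next_ne_zero hw h]
    split <;> omega
  calc ∑ w' ∈ listsOfLengthLE V (w.length + 1), pol.next w v w' * g w'.length
      = ∑ w' ∈ listsOfLengthLE V (w.length + 1), pol.next w v w' *
          g (if v ∈ G.unmatched w then w.length + 1 else w.length - 1) := by
        refine sum_congr rfl fun w' _ => ?_
        by_cases h : pol.next w v w' = 0
        · simp [h]
        · rw [pol.length_of_next_ne_zero hw h]
    _ = _ := by
        rw [← sum_mul, (tsum_eq_sum hsupp).symm.trans (pol.total w hw v), one_mul]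

end Policy

variable [Fintype V] (pol : Policy G) {μ : V → ℝ}

lemma kernel_nonneg (hμ : ∀ v, 0 ≤ μ v) (w w' : List V) : 0 ≤ kernel G pol μ w w' :=
  sum_nonneg fun v _ => mul_nonneg (hμ v) (pol.nonneg w v w')

lemma kernel_pos (hμ : ∀ v, 0 < μ v) (h : pol.next w v w' ≠ 0) : 0 < kernel G pol μ w w' :=
  sum_pos' (fun u _ => mul_nonneg (hμ u).le (pol.nonneg w u w'))
    ⟨v, mem_univ v, mul_pos (hμ v) ((pol.nonneg w v w').lt_of_ne' h)⟩

lemma exists_next_ne_zero_of_kernel_ne_zero (h : kernel G pol μ w w' ≠ 0) :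
    ∃ v, pol.next w v w' ≠ 0 := by
  obtain ⟨v, -, hv⟩ := exists_ne_zero_of_sum_ne_zero h
  exact ⟨v, right_ne_zero_of_mul hv⟩

lemma mem_wspace_of_kernel_ne_zero (hw : w ∈ WSpace G) (h : kernel G pol μ w w' ≠ 0) :
    w' ∈ WSpace G :=
  have ⟨_, hv⟩ := exists_next_ne_zero_of_kernel_ne_zero pol h
  pol.mem_wspace_of_next_ne_zero hw hv

lemma length_le_of_kernel_ne_zero (hw : w ∈ WSpace G) (h : kernel G pol μ w w' ≠ 0) :
    w'.length ≤ w.length + 1 ∧ w.length ≤ w'.length + 1 := by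
  obtain ⟨v, hv⟩ := exists_next_ne_zero_of_kernel_ne_zero pol h
  rw [pol.length_of_next_ne_zero hw hv]
  split <;> omega

lemma sum_kernel_mul_length (hw : w ∈ WSpace G) (g : ℕ → ℝ) :
    ∑ w' ∈ listsOfLengthLE V (w.length + 1), kernel G pol μ w w' * g w'.length =
      mass μ (G.unmatched w) * g (w.length + 1) +
        mass μ (G.unmatched w)ᶜ * g (w.length - 1) := by
  simp only [kernel, sum_mul, mul_assoc]
  rw [sum_comm]
  simp only [← mul_sum, pol.sum_next_mul_length hw, apply_ite g]
  exact sum_mul_ite_mem μ _ _ _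

end Queue

section Law

variable [DecidableEq V] [Fintype V] {G : Multigraph V} (pol : Policy G) {μ : V → ℝ}

noncomputable def lawFromEmpty (G : Multigraph V) (pol : Policy G) (μ : V → ℝ) :
    ℕ → List V → ℝ
  | 0 => Pi.single [] 1
  | n + 1 => fun w' => ∑' w, lawFromEmpty G pol μ n w * kernel G pol μ w w'

lemma lawFromEmpty_nonneg (hμ : ∀ v, 0 ≤ μ v) (n : ℕ) (w : List V) :
    0 ≤ lawFromEmpty G pol μ n w := by
  induction n generalizing w with
  | zero => by_cases h : w = [] <;> simp [lawFromEmpty, h]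
  | succ n ih => exact tsum_nonneg fun u => mul_nonneg (ih u) (kernel_nonneg pol hμ u w)

lemma mem_of_lawFromEmpty_ne_zero {n : ℕ} {w : List V} (h : lawFromEmpty G pol μ n w ≠ 0) :
    w ∈ WSpace G ∧ w.length ≤ n := by
  induction n generalizing w with
  | zero =>
    obtain rfl : w = [] := by
      by_contra hw
      simp [lawFromEmpty, hw] at h
    exact ⟨nil_mem_wspace, le_rfl⟩
  | succ n ih =>
    obtain ⟨u, hu⟩ : ∃ u, lawFromEmpty G pol μ n u * kernel G pol μ u w ≠ 0 := by
      by_contra! h0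
      simp [lawFromEmpty, h0] at h
    obtain ⟨huW, hulen⟩ := ih (left_ne_zero_of_mul hu)
    have hk := right_ne_zero_of_mul hu
    exact ⟨mem_wspace_of_kernel_ne_zero pol huW hk,
      by linarith [(length_le_of_kernel_ne_zero pol huW hk).1]⟩

lemma lawFromEmpty_succ (n : ℕ) (w' : List V) :
    lawFromEmpty G pol μ (n + 1) w' =
      ∑ w ∈ listsOfLengthLE V n, lawFromEmpty G pol μ n w * kernel G pol μ w w' := by
  rw [lawFromEmpty]
  exact tsum_eq_sum fun w hw => by
    by_contra h
    exact hw (mem_listsOfLengthLE.2 (mem_of_lawFromEmpty_ne_zero pol (left_ne_zero_of_mul h)).2)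

lemma sum_lawFromEmpty_succ_mul_length (n : ℕ) (g : ℕ → ℝ) :
    ∑ w' ∈ listsOfLengthLE V (n + 1), lawFromEmpty G pol μ (n + 1) w' * g w'.length =
      ∑ w ∈ listsOfLengthLE V n, lawFromEmpty G pol μ n w *
        (mass μ (G.unmatched w) * g (w.length + 1) +
          mass μ (G.unmatched w)ᶜ * g (w.length - 1)) := by
  simp only [lawFromEmpty_succ, sum_mul]
  rw [sum_comm]
  refine sum_congr rfl fun w hw => ?_
  by_cases h0 : lawFromEmpty G pol μ n w = 0
  · simp [h0]
  have hwW := (mem_of_lawFromEmpty_ne_zero pol h0).1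
  have hsub : listsOfLengthLE V (w.length + 1) ⊆ listsOfLengthLE V (n + 1) := fun w' hw' => by
    simp only [mem_listsOfLengthLE] at hw hw' ⊢
    omega
  rw [← sum_kernel_mul_length (μ := μ) pol hwW, mul_sum, ← sum_subset hsub]
  · exact sum_congr rfl fun w' _ => by ring
  · intro w' _ hw'
    have hk : kernel G pol μ w w' = 0 := by
      by_contra hk
      exact hw' (mem_listsOfLengthLE.2 (length_le_of_kernel_ne_zero pol hwW hk).1)
    simp [hk]

lemma sum_lawFromEmpty (hμ : ∑ v, μ v = 1) (n : ℕ) :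
    ∑ w ∈ listsOfLengthLE V n, lawFromEmpty G pol μ n w = 1 := by
  induction n with
  | zero => simp [lawFromEmpty, sum_pi_single']
  | succ n ih =>
    simpa [mass_add_mass_compl, hμ, ih] using
      sum_lawFromEmpty_succ_mul_length (μ := μ) pol n fun _ => 1

lemma sum_lawFromEmpty_mul_pow_le (hμ0 : ∀ v, 0 ≤ μ v) (hμ1 : ∑ v, μ v = 1) {β γ : ℝ}
    (hβ : 1 ≤ β) (hγ0 : 0 ≤ γ) (hγ1 : γ < 1)
    (hdrift : ∀ w ∈ WSpace G, mass μ (G.unmatched w) * β ^ (w.length + 1) +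
      mass μ (G.unmatched w)ᶜ * β ^ (w.length - 1) ≤ γ * β ^ w.length + β) (n : ℕ) :
    ∑ w ∈ listsOfLengthLE V n, lawFromEmpty G pol μ n w * β ^ w.length ≤ β / (1 - γ) := by
  have h1γ : 0 < 1 - γ := by linarith
  induction n with
  | zero =>
    simp only [lawFromEmpty, Pi.single_apply, ite_mul, one_mul, zero_mul, sum_ite_eq',
      mem_listsOfLengthLE, List.length_nil, le_refl, if_true, pow_zero]
    rw [le_div_iff₀ h1γ]
    linarith
  | succ n ih =>
    rw [sum_lawFromEmpty_succ_mul_length pol n (β ^ ·)]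
    calc _ ≤ ∑ w ∈ listsOfLengthLE V n, lawFromEmpty G pol μ n w * (γ * β ^ w.length + β) :=
          sum_le_sum fun w _ => by
            by_cases h0 : lawFromEmpty G pol μ n w = 0
            · simp [h0]
            exact mul_le_mul_of_nonneg_left (hdrift w (mem_of_lawFromEmpty_ne_zero pol h0).1)
              (lawFromEmpty_nonneg pol hμ0 n w)
      _ = γ * ∑ w ∈ listsOfLengthLE V n, lawFromEmpty G pol μ n w * β ^ w.length + β := by
          simp only [mul_add, sum_add_distrib, ← sum_mul, sum_lawFromEmpty pol hμ1, one_mul,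
            mul_sum]
          exact congrArg (· + β) (sum_congr rfl fun _ _ => by ring)
      _ ≤ γ * (β / (1 - γ)) + β := by gcongr
      _ = β / (1 - γ) := by field_simp; ring

lemma lawFromEmpty_tight (hμ0 : ∀ v, 0 ≤ μ v) (hμ1 : ∑ v, μ v = 1) {β B : ℝ} (hβ : 1 < β)
    (hB : ∀ n, ∑ w ∈ listsOfLengthLE V n, lawFromEmpty G pol μ n w * β ^ w.length ≤ B) :
    ∀ ε > 0, ∃ F : Finset (List V), ∀ n, 1 - ε ≤ ∑ w ∈ F, lawFromEmpty G pol μ n w := by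
  intro ε hε
  obtain ⟨L, hL⟩ := ((tendsto_const_nhds (x := B)).div_atTop
    (tendsto_pow_atTop_atTop_of_one_lt hβ)).eventually (gt_mem_nhds hε) |>.exists
  refine ⟨listsOfLengthLE V L, fun n => ?_⟩
  let T := listsOfLengthLE V n
  have hx0 := lawFromEmpty_nonneg pol hμ0 n
  have hsplit := sum_filter_add_sum_filter_not T (fun w => w.length ≤ L) (lawFromEmpty G pol μ n)
  have hhead : ∑ w ∈ T with w.length ≤ L, lawFromEmpty G pol μ n w ≤
      ∑ w ∈ listsOfLengthLE V L, lawFromEmpty G pol μ n w :=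
    sum_le_sum_of_subset_of_nonneg (fun w hw => by simp_all) fun w _ _ => hx0 w
  have htail : β ^ L * ∑ w ∈ T with ¬ w.length ≤ L, lawFromEmpty G pol μ n w ≤ B :=
    calc _ = ∑ w ∈ T with ¬ w.length ≤ L, lawFromEmpty G pol μ n w * β ^ L := by
          rw [mul_sum]; exact sum_congr rfl fun _ _ => mul_comm _ _
      _ ≤ ∑ w ∈ T with ¬ w.length ≤ L, lawFromEmpty G pol μ n w * β ^ w.length :=
          sum_le_sum fun w hw => mul_le_mul_of_nonneg_left
            (pow_le_pow_right₀ hβ.le (by simp at hw; omega)) (hx0 w)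
      _ ≤ ∑ w ∈ T, lawFromEmpty G pol μ n w * β ^ w.length :=
          sum_le_sum_of_subset_of_nonneg (filter_subset _ _)
            fun w _ _ => mul_nonneg (hx0 w) (by positivity)
      _ ≤ B := hB n
  have htail' : ∑ w ∈ T with ¬ w.length ≤ L, lawFromEmpty G pol μ n w ≤ B / β ^ L := by
    rw [le_div_iff₀ (by positivity)]
    linarith
  linarith [sum_lawFromEmpty pol hμ1 n]

lemma geometric_drift_le {u q β : ℝ} {n : ℕ} (hβ : 1 ≤ β) (hq : q ∈ Set.Icc (0 : ℝ) 1) (hu1 : u ≤ 1)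
    (hu : n ≠ 0 → u ≤ q) :
    u * β ^ (n + 1) + (1 - u) * β ^ (n - 1) ≤ (q * β + (1 - q) / β) * β ^ n + β := by
  have hβ0 : 0 < β := by linarith
  have hγ0 : 0 ≤ q * β + (1 - q) / β :=
    add_nonneg (mul_nonneg hq.1 hβ0.le) (div_nonneg (sub_nonneg.2 hq.2) hβ0.le)
  rcases n with _ | m
  · simp only [zero_add, pow_one, pow_zero, mul_one, Nat.zero_sub]
    nlinarith
  · have hpow : β ^ m ≤ β ^ (m + 2) := pow_le_pow_right₀ hβ (by omega)
    have hγ : (q * β + (1 - q) / β) * β ^ (m + 1) = q * β ^ (m + 2) + (1 - q) * β ^ m := by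
      field_simp
      ring
    simp only [Nat.add_sub_cancel, hγ]
    nlinarith [hu m.succ_ne_zero]

theorem exists_isStationary_of_mass_unmatched_le (hμ0 : ∀ v, 0 ≤ μ v) (hμ1 : ∑ v, μ v = 1)
    {q : ℝ} (hq0 : 0 ≤ q) (hq : q < 1 / 2)
    (hunm : ∀ w ∈ WSpace G, w ≠ [] → mass μ (G.unmatched w) ≤ q) :
    ∃ π, IsStationary G (kernel G pol μ) π := by
  set β := 2 * (1 - q)
  have hβ : 1 < β := by linarith
  have hγ : q * β + (1 - q) / β = 1 / 2 + 2 * q * (1 - q) := by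
    field_simp
    ring
  have hdrift : ∀ w ∈ WSpace G, mass μ (G.unmatched w) * β ^ (w.length + 1) +
      mass μ (G.unmatched w)ᶜ * β ^ (w.length - 1) ≤
        (1 / 2 + 2 * q * (1 - q)) * β ^ w.length + β := fun w hw => by
    have hcompl : mass μ (G.unmatched w)ᶜ = 1 - mass μ (G.unmatched w) := by
      linarith [mass_add_mass_compl μ (G.unmatched w)]
    rw [hcompl, ← hγ]
    refine geometric_drift_le hβ.le ⟨hq0, by linarith⟩ ?_ fun hn => hunm w hw (by simpa using hn)
    linarith [mass_nonneg hμ0 (G.unmatched w)ᶜ]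
  have hB := sum_lawFromEmpty_mul_pow_le pol hμ0 hμ1 hβ.le (by nlinarith) (by nlinarith) hdrift
  have hfin : ∀ n w, w ∉ listsOfLengthLE V n → lawFromEmpty G pol μ n w = 0 := fun n w hw => by
    by_contra h
    exact hw (mem_listsOfLengthLE.2 (mem_of_lawFromEmpty_ne_zero pol h).2)
  exact exists_stationary_of_tight (S := WSpace G)
    (fun w' => ⟨listsOfLengthLE V (w'.length + 1), fun w hw hwF => by
      by_contra h
      exact hwF (mem_listsOfLengthLE.2 (length_le_of_kernel_ne_zero pol hw h).2)⟩)
    (lawFromEmpty_nonneg pol hμ0)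
    (fun n w hw => by
      by_contra h
      exact hw (mem_of_lawFromEmpty_ne_zero pol h).1)
    (fun n => sum_lawFromEmpty pol hμ1 n ▸ hasSum_sum_of_ne_finset_zero (hfin n))
    (fun n w' => rfl)
    (lawFromEmpty_tight pol hμ0 hμ1 hβ hB)

end Law

section Irreducible

variable [DecidableEq V] [Fintype V] {G : Multigraph V} (pol : Policy G) {μ : V → ℝ}

lemma reflTransGen_kernel_nil (hμ : ∀ v, 0 < μ v) (hG : ∀ a, ∃ v, G.Adj a v) {w : List V}
    (hw : w ∈ WSpace G) : Relation.ReflTransGen (fun a b => 0 < kernel G pol μ a b) w [] := by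
  induction hn : w.length generalizing w with
  | zero => rw [List.length_eq_zero_iff.1 hn]
  | succ n ih =>
    obtain ⟨a, ha⟩ := List.exists_mem_of_length_pos (by omega : 0 < w.length)
    obtain ⟨v, hv⟩ := hG a
    obtain ⟨w', hw'⟩ : ∃ w', pol.next w v w' ≠ 0 := by
      by_contra! h
      simpa [h] using pol.total w hw v
    have hlen := pol.length_of_next_ne_zero hw hw'
    rw [if_neg fun hvu => hvu a ha hv] at hlen
    exact .head (kernel_pos pol hμ hw') (ih (pol.mem_wspace_of_next_ne_zero hw hw') (by omega))

lemma reflTransGen_nil_kernel (hμ : ∀ v, 0 < μ v) {w : List V} (hw : w ∈ WSpace G) :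
    Relation.ReflTransGen (fun a b => 0 < kernel G pol μ a b) [] w := by
  induction w using List.reverseRecOn with
  | nil => exact .refl
  | append_singleton w v ih =>
    obtain ⟨hwW, hv⟩ := append_mem_wspace_iff.1 hw
    exact .tail (ih hwW) (kernel_pos pol hμ (by rw [pol.noMatch w hwW v hv]; exact one_ne_zero))

theorem irreducible_kernel (hμ : ∀ v, 0 < μ v) (hG : ∀ a, ∃ v, G.Adj a v) :
    Irreducible G (kernel G pol μ) := fun _ hw _ hw' =>
  (reflTransGen_kernel_nil pol hμ hG hw).trans (reflTransGen_nil_kernel pol hμ hw')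

end Irreducible

section CompleteMultipartite

variable {G : Multigraph V} {ι : Type*} {f : V → ι}

lemma adj_of_ne (hf : ∀ u v, (check G).Adj u v ↔ f u ≠ f v) {u v : V} (h : f u ≠ f v) :
    G.Adj u v :=
  ((hf u v).2 h).1

lemma unmatched_subset_fiber [DecidableEq V] (hf : ∀ u v, (check G).Adj u v ↔ f u ≠ f v)
    {w : List V} {a : V} (ha : a ∈ w) : G.unmatched w ⊆ {v | f v = f a} := fun v hv => by
  by_contra h
  exact hv a ha (adj_of_ne hf (Ne.symm h))

variable [Fintype V] {μ : V → ℝ}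

lemma mass_fiber_lt_half (hf : ∀ u v, (check G).Adj u v ↔ f u ≠ f v) (hμ : Ncond (check G) μ)
    (a : V) : mass μ {v | f v = f a} < 1 / 2 := by
  have hindep : (check G).IsIndep {v | f v = f a} :=
    ⟨⟨a, rfl⟩, fun i hi j hj hij => (hf i j).1 hij (hi.trans hj.symm)⟩
  have hnbhd : (check G).nbhd {v | f v = f a} = {v | f v = f a}ᶜ := by
    ext v
    exact ⟨fun ⟨u, hu, huv⟩ hv => (hf u v).1 huv (hu.trans hv.symm),
      fun hv => ⟨a, rfl, (hf a v).2 (Ne.symm hv)⟩⟩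
  have hlt := hμ.2 _ hindep
  rw [hnbhd] at hlt
  linarith [mass_add_mass_compl μ {v | f v = f a}, hμ.1.2]

lemma exists_adj (hf : ∀ u v, (check G).Adj u v ↔ f u ≠ f v) (hμ : Ncond (check G) μ)
    (a : V) : ∃ v, G.Adj a v := by
  have hpos : 0 < mass μ {v | f v = f a}ᶜ := by
    linarith [mass_fiber_lt_half hf hμ a, mass_add_mass_compl μ {v | f v = f a}, hμ.1.2]
  obtain ⟨v, hv⟩ := nonempty_of_mass_pos hpos
  exact ⟨v, adj_of_ne hf (Ne.symm hv)⟩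

end CompleteMultipartite

end Multigraph

theorem ncond_check_subset_stab_general {V : Type*} [Fintype V] [DecidableEq V]
    (G : Multigraph V) (p : ℕ) (hpart : CompletePPartite G p)
    (pol : Policy G) (μ : V → ℝ) (hμ : Ncond (check G) μ) :
    PositiveRecurrent G (kernel G pol μ) := by
  obtain ⟨f, -, hf⟩ := hpart
  have hμ0 : ∀ v, 0 ≤ μ v := fun v => (hμ.1.1 v).le
  have : Nonempty V := by
    by_contra h
    simpa [not_nonempty_iff.1 h] using hμ.1.2
  obtain ⟨a₀, ha₀⟩ := Finite.exists_max fun a => mass μ {v | f v = f a}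
  refine ⟨irreducible_kernel pol hμ.1.1 (exists_adj hf hμ),
    exists_isStationary_of_mass_unmatched_le pol hμ0 hμ.1.2 (mass_nonneg hμ0 _)
      (mass_fiber_lt_half hf hμ a₀) fun w _ hw => ?_⟩
  obtain ⟨a, ha⟩ := List.exists_mem_of_ne_nil w hw
  exact (mass_mono hμ0 (unmatched_subset_fiber hf ha)).trans (ha₀ a)

/-- Let `G` be a complete `p`-partite multigraph with `p ≥ 3`. Then
`Ncond(Ǧ) ⊆ stab(G,Φ)` for every admissible matching policy `Φ`: for every
`μ ∈ Ncond(Ǧ)`, the chain of the model `(G,Φ,μ)` is positive recurrent. -/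
theorem ncond_check_subset_stab {V : Type*} [Fintype V] [DecidableEq V]
    (G : Multigraph V) (p : ℕ) (hp : 3 ≤ p) (hpart : CompletePPartite G p)
    (pol : Policy G) (μ : V → ℝ) (hμ : Ncond (check G) μ) :
    PositiveRecurrent G (kernel G pol μ) :=
  ncond_check_subset_stab_general G p hpart pol μ hμ
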